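/- If Z₁ ∈ R^{d×n₁} and Z₂ ∈ R^{d×n₂} satisfy Z₁ᵀ Z₂ = 0, then det(I_d + Z₁Z₁ᵀ + Z₂Z₂ᵀ) = det(I_d + Z₁Z₁ᵀ)·det(I_d + Z₂Z₂ᵀ). -/

import Mathlib

open Matrix

/-- If `Z₁ᵀ Z₂ = 0` then `det (I + Z₁Z₁ᵀ + Z₂Z₂ᵀ) = det (I + Z₁Z₁ᵀ) · det (I + Z₂Z₂ᵀ)`. -/
theorem det_add_of_orthogonal_blocks (d n₁ n₂ : ℕ)
    (Z₁ : Matrix (Fin d) (Fin n₁) ℝ) (Z₂ : Matrix (Fin d) (Fin n₂) ℝ)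
    (horth : Z₁ᵀ * Z₂ = 0) :
    ((1 : Matrix (Fin d) (Fin d) ℝ) + Z₁ * Z₁ᵀ + Z₂ * Z₂ᵀ).det =
      ((1 : Matrix (Fin d) (Fin d) ℝ) + Z₁ * Z₁ᵀ).det *
        ((1 : Matrix (Fin d) (Fin d) ℝ) + Z₂ * Z₂ᵀ).det := by
  have horth' : Z₂ᵀ * Z₁ = 0 := by
    have := congrArg Matrix.transpose horth
    simpa [Matrix.transpose_mul] using this
  have h1 : (1 : Matrix (Fin d) (Fin d) ℝ) + Z₁ * Z₁ᵀ + Z₂ * Z₂ᵀ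
      = 1 + fromCols Z₁ Z₂ * (fromCols Z₁ Z₂)ᵀ := by
    rw [transpose_fromCols, fromCols_mul_fromRows, add_assoc]
  rw [h1, det_one_add_mul_comm, transpose_fromCols, fromRows_mul_fromCols,
    horth, horth']
  have h2 : (1 : Matrix (Fin n₁ ⊕ Fin n₂) (Fin n₁ ⊕ Fin n₂) ℝ)
      = fromBlocks 1 0 0 1 := by
    rw [fromBlocks_one]
  rw [h2, fromBlocks_add, add_zero, add_zero, det_fromBlocks_zero₂₁]
  rw [det_one_add_mul_comm Z₁ᵀ Z₁, det_one_add_mul_comm Z₂ᵀ Z₂]
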